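/- Let W ⊆ ℝ^p, let x be fixed, and let w ∈ W ↦ ψ_w(x) ∈ ℝ^d be Lipschitz continuous with constant L_W. Then for every λ > 0 and every y ∈ Y, the map w ∈ W ↦ p_λ(y|ψ_w(x)) is Lipschitz continuous with constant L_W·√d/λ, where p_λ(y|θ) := E_Z[p_0(y| θ + λ·Z)] and Z is a standard Gaussian random vector in ℝ^d (law N(0, I_d)). -/

import Mathlib

open MeasureTheory Metric Real
open scoped RealInnerProductSpace

noncomputable section

/-- Density of the Gaussian measure `N(0, σ²·I_d)` on `ℝ^d`. -/
def gaussDensity (d : ℕ) (σ : ℝ) (v : EuclideanSpace ℝ (Fin d)) : ℝ :=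
  (2 * π * σ ^ 2) ^ (-(d : ℝ) / 2) * Real.exp (-‖v‖ ^ 2 / (2 * σ ^ 2))

/-- The Gaussian measure `N(0, σ²·I_d)` on `ℝ^d`. -/
def gaussMeasure (d : ℕ) (σ : ℝ) : Measure (EuclideanSpace ℝ (Fin d)) :=
  volume.withDensity fun v => ENNReal.ofReal (gaussDensity d σ v)

/-- Normal cone `F_y` of the finite set `Y` at the point `y`. -/
def normalCone {d : ℕ} (Y : Finset (EuclideanSpace ℝ (Fin d)))
    (y : EuclideanSpace ℝ (Fin d)) : Set (EuclideanSpace ℝ (Fin d)) :=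
  {θ | ∀ y' ∈ Y, ⟪y', θ⟫ ≤ ⟪y, θ⟫}

/-- Internal cone radius `ρ(θ)`. -/
def coneRadius {d : ℕ} (Y : Finset (EuclideanSpace ℝ (Fin d)))
    (θ : EuclideanSpace ℝ (Fin d)) : ℝ :=
  sSup {r : ℝ | 0 < r ∧ ∀ u ∈ closedBall (0 : EuclideanSpace ℝ (Fin d)) 1,
    ∃ y ∈ Y, θ ∈ normalCone Y y ∧ θ + r • u ∈ normalCone Y y}

/-- Uniform probability measure on the closed Euclidean unit ball of `ℝ^d`. -/
def uniformBall (d : ℕ) : Measure (EuclideanSpace ℝ (Fin d)) :=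
  (volume (closedBall (0 : EuclideanSpace ℝ (Fin d)) 1))⁻¹ •
    volume.restrict (closedBall (0 : EuclideanSpace ℝ (Fin d)) 1)

/-- `p_0(y|θ) = P[θ + ρ(θ)·U ∈ F_y]` for `U` uniform on the closed unit ball. -/
def p0 {d : ℕ} (Y : Finset (EuclideanSpace ℝ (Fin d)))
    (y θ : EuclideanSpace ℝ (Fin d)) : ℝ :=
  (uniformBall d {u | θ + coneRadius Y θ • u ∈ normalCone Y y}).toReal

/-!
Writing `φ_d` for the standard Gaussian density, `p_λ(y|θ) = ∫ φ_d(z) p₀(y|θ + λz) dz`.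
The substitution `z ↦ z + (θ - θ')/λ` moves the change of parameter into the density, and since
`0 ≤ p₀ ≤ 1` the difference `p_λ(y|θ) - p_λ(y|θ')` is at most the `L¹` distance between `φ_d` and
its translate by `a = (θ - θ')/λ`. As `φ_d` is a product of one-dimensional densities `φ`, that
distance is at most `∑ᵢ ‖φ(· + aᵢ) - φ‖₁ ≤ ∑ᵢ |aᵢ| ‖φ'‖₁ ≤ ∑ᵢ |aᵢ| ≤ √d ‖a‖`, because
`‖φ'‖₁ = 2 φ(0) = √(2/π) ≤ 1`.
-/

open Set Filter Topology ProbabilityTheory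

theorem integral_abs_sub_comp_add_le_of_nonneg {f f' : ℝ → ℝ} (hf : ∀ x, HasDerivAt f (f' x) x)
    (hf' : Integrable f') {t : ℝ} (ht : 0 ≤ t) :
    ∫ x, |f (x + t) - f x| ≤ t * ∫ x, |f' x| := by
  have hmeas : Measurable f' := funext (fun x => (hf x).deriv) ▸ measurable_deriv f
  have hpoint : ∀ x, |f (x + t) - f x| ≤ ∫ s in Ioc 0 t, |f' (x + s)| := by
    intro x
    have hftc : ∫ s in (0)..t, f' (x + s) = f (x + t) - f x := by
      rw [intervalIntegral.integral_comp_add_left, add_zero,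
        intervalIntegral.integral_eq_sub_of_hasDerivAt (fun s _ => hf s) hf'.intervalIntegrable]
    rw [← hftc, ← intervalIntegral.integral_of_le ht]
    exact intervalIntegral.abs_integral_le_integral_abs ht
  have hprod : Integrable (Function.uncurry fun x s => |f' (x + s)|)
      (volume.prod (volume.restrict (Ioc 0 t))) := by
    refine (integrable_prod_iff' ?_).2
      ⟨Eventually.of_forall fun s => (hf'.comp_add_right s).abs, ?_⟩
    · exact (hmeas.comp measurable_add).abs.aestronglyMeasurable
    · simp only [Function.uncurry_apply_pair, norm_abs_eq_norm, Real.norm_eq_abs]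
      simp_rw [integral_add_right_eq_self (fun x => |f' x|)]
      exact integrable_const _
  calc ∫ x, |f (x + t) - f x|
      ≤ ∫ x, ∫ s in Ioc 0 t, |f' (x + s)| :=
        integral_mono_of_nonneg (Eventually.of_forall fun _ => abs_nonneg _)
          hprod.integral_prod_left (Eventually.of_forall hpoint)
    _ = ∫ s in Ioc 0 t, ∫ x, |f' (x + s)| := integral_integral_swap hprod
    _ = t * ∫ x, |f' x| := by
        simp_rw [integral_add_right_eq_self (fun x => |f' x|)]
        simp [ht]

theorem integral_abs_sub_comp_add_le {f f' : ℝ → ℝ} (hf : ∀ x, HasDerivAt f (f' x) x)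
    (hf' : Integrable f') (t : ℝ) :
    ∫ x, |f (x + t) - f x| ≤ |t| * ∫ x, |f' x| := by
  rcases le_total 0 t with ht | ht
  · rw [abs_of_nonneg ht]
    exact integral_abs_sub_comp_add_le_of_nonneg hf hf' ht
  · have hreflect : ∫ x, |f (x + t) - f x| = ∫ x, |f (x + -t) - f x| := by
      rw [← integral_sub_right_eq_self _ t]
      simp_rw [sub_add_cancel, abs_sub_comm, sub_eq_add_neg]
    rw [abs_of_nonpos ht, hreflect]
    exact integral_abs_sub_comp_add_le_of_nonneg hf hf' (neg_nonneg.2 ht)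

open Finset in
theorem abs_prod_sub_prod_le_sum_prod {ι : Type*} [Fintype ι] [LinearOrder ι] {p q : ι → ℝ}
    (hp : ∀ i, 0 ≤ p i) (hq : ∀ i, 0 ≤ q i) :
    |∏ i, p i - ∏ i, q i| ≤
      ∑ i, ∏ j, if j = i then |p j - q j| else if j < i then p j else q j := by
  have htelescope := prod_add_ordered univ q (fun i => p i - q i)
  simp only [add_sub_cancel] at htelescope
  rw [htelescope, add_sub_cancel_left]
  refine (abs_sum_le_sum_abs _ _).trans (sum_le_sum fun i _ => le_of_eq ?_)
  have hsplit : ∀ j ∈ univ.erase i, (if j = i then |p j - q j| else if j < i then p j else q j) =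
      if j < i then p j else q j := fun j hj => if_neg (ne_of_mem_erase hj)
  rw [← mul_prod_erase univ _ (mem_univ i), if_pos rfl, prod_congr rfl hsplit, prod_ite,
    abs_mul, abs_mul, abs_of_nonneg (prod_nonneg fun j _ => hp j),
    abs_of_nonneg (prod_nonneg fun j _ => hq j), mul_assoc]
  congr 3 <;> ext j <;> simp only [mem_filter, mem_erase] <;>
    grind

-- Each term of the telescoping bound is a product of functions of one coordinate each, all but
-- one of which integrate to `1`.
open Finset in
theorem integral_abs_prod_comp_add_sub_prod_le {ι : Type*} [Fintype ι] [LinearOrder ι]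
    {h : ι → ℝ → ℝ} (h_nonneg : ∀ i u, 0 ≤ h i u) (h_int : ∀ i, Integrable (h i))
    (h_one : ∀ i, ∫ u, h i u = 1) (a : ι → ℝ) :
    ∫ x : ι → ℝ, |∏ i, h i (x i + a i) - ∏ i, h i (x i)| ≤
      ∑ i, ∫ u, |h i (u + a i) - h i u| := by
  set k : ι → ι → ℝ → ℝ := fun i j u =>
    if j = i then |h j (u + a j) - h j u| else if j < i then h j (u + a j) else h j u with hk
  have hk_int : ∀ i j, Integrable (k i j) := by
    intro i j
    simp only [hk]
    split_ifs
    · exact (((h_int j).comp_add_right (a j)).sub (h_int j)).abs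
    · exact (h_int j).comp_add_right (a j)
    · exact h_int j
  have hterm_int : ∀ i, Integrable (fun x : ι → ℝ => ∏ j, k i j (x j)) :=
    fun i => Integrable.fintype_prod (hk_int i)
  have hk_integral : ∀ i, ∫ x : ι → ℝ, ∏ j, k i j (x j) = ∫ u, |h i (u + a i) - h i u| := by
    intro i
    rw [integral_fintype_prod_volume_eq_prod, prod_eq_single_of_mem i (mem_univ i)]
    · simp [hk]
    · intro j _ hji
      simp only [hk, if_neg hji]
      split_ifs
      · rw [integral_add_right_eq_self (h j), h_one]
      · exact h_one j
  calc ∫ x : ι → ℝ, |∏ i, h i (x i + a i) - ∏ i, h i (x i)|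
      ≤ ∫ x : ι → ℝ, ∑ i, ∏ j, k i j (x j) :=
        integral_mono_of_nonneg (Eventually.of_forall fun _ => abs_nonneg _)
          (integrable_finsetSum _ fun i _ => hterm_int i)
          (Eventually.of_forall fun x => by
            simpa only [hk] using abs_prod_sub_prod_le_sum_prod
              (fun i => h_nonneg i (x i + a i)) (fun i => h_nonneg i (x i)))
    _ = ∑ i, ∫ u, |h i (u + a i) - h i u| := by
        rw [integral_finsetSum _ fun i _ => hterm_int i]
        exact sum_congr rfl fun i _ => hk_integral i

theorem abs_integral_mul_comp_add_sub_le {G : Type*} [MeasurableSpace G] [AddGroup G]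
    [MeasurableAdd G] {μ : Measure G} [μ.IsAddRightInvariant] {g F : G → ℝ}
    (hg : Integrable g μ) (hF : AEStronglyMeasurable F μ) {C : ℝ} (hFC : ∀ z, |F z| ≤ C)
    (b : G) :
    |∫ z, g z * F (z + b) ∂μ - ∫ z, g z * F z ∂μ| ≤ C * ∫ z, |g (z - b) - g z| ∂μ := by
  have hshift : ∫ z, g z * F (z + b) ∂μ = ∫ z, g (z - b) * F z ∂μ := by
    simpa using (integral_sub_right_eq_self (fun z => g z * F (z + b)) b).symm
  have hFC' : ∀ᵐ z ∂μ, ‖F z‖ ≤ C := Eventually.of_forall hFC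
  have hint_shift : Integrable (fun z => g (z - b) * F z) μ :=
    (hg.comp_sub_right b).mul_bdd hF hFC'
  rw [hshift, ← integral_sub hint_shift (hg.mul_bdd hF hFC'), ← integral_const_mul,
    ← Real.norm_eq_abs]
  refine norm_integral_le_of_norm_le
    ((((hg.comp_sub_right b).sub hg).abs).const_mul C) (Eventually.of_forall fun z => ?_)
  rw [← sub_mul, norm_mul, Real.norm_eq_abs, Real.norm_eq_abs, mul_comm]
  exact mul_le_mul_of_nonneg_right (hFC z) (abs_nonneg _)

-- The second conjunct is boundedness: `sSup` of an unbounded set of reals is `0`.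
theorem lt_sSup_iff_exists_rat_of_forall_mem_of_le {S : Set ℝ}
    (hdown : ∀ r r', r ∈ S → 0 < r' → r' ≤ r → r' ∈ S) {c : ℝ} (hc : 0 ≤ c) :
    c < sSup S ↔ (∃ q : ℚ, c < q ∧ (q : ℝ) ∈ S) ∧ ∃ q : ℚ, 0 < (q : ℝ) ∧ (q : ℝ) ∉ S := by
  constructor
  · intro hlt
    have hne : S.Nonempty := by
      by_contra h
      rw [not_nonempty_iff_eq_empty.1 h, Real.sSup_empty] at hlt
      exact hc.not_gt hlt
    have hbdd : BddAbove S := by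
      by_contra h
      rw [Real.sSup_of_not_bddAbove h] at hlt
      exact hc.not_gt hlt
    obtain ⟨r, hr, hcr⟩ := exists_lt_of_lt_csSup hne hlt
    obtain ⟨q, hcq, hqr⟩ := exists_rat_btwn hcr
    obtain ⟨b, hb⟩ := hbdd
    obtain ⟨q', hq'⟩ := exists_rat_gt (max b 0)
    exact ⟨⟨q, hcq, hdown r q hr (hc.trans_lt hcq) hqr.le⟩,
      ⟨q', (le_max_right b 0).trans_lt hq',
        fun hq'S => ((le_max_left b 0).trans_lt hq').not_ge (hb hq'S)⟩⟩
  · rintro ⟨⟨q, hcq, hqS⟩, ⟨q', hq'pos, hq'S⟩⟩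
    have hbdd : BddAbove S :=
      ⟨q', fun r hr => not_lt.1 fun hlt => hq'S (hdown r q' hr hq'pos hlt.le)⟩
    exact hcq.trans_le (le_csSup hbdd hqS)

theorem measurable_sSup_of_forall_mem_of_le {α : Type*} [MeasurableSpace α] {S : α → Set ℝ}
    (hpos : ∀ x, S x ⊆ Ioi 0) (hdown : ∀ x r r', r ∈ S x → 0 < r' → r' ≤ r → r' ∈ S x)
    (hmeas : ∀ r, MeasurableSet {x | r ∈ S x}) : Measurable fun x => sSup (S x) := by
  refine measurable_of_Ioi fun c => ?_
  rcases lt_or_ge c 0 with hc | hc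
  · convert MeasurableSet.univ
    exact eq_univ_of_forall fun x => hc.trans_le (Real.sSup_nonneg fun r hr => (hpos x hr).le)
  have hpre : (fun x => sSup (S x)) ⁻¹' Ioi c =
      (⋃ q : ℚ, {x | c < q} ∩ {x | (q : ℝ) ∈ S x}) ∩
        ⋃ q : ℚ, {x | 0 < (q : ℝ)} ∩ {x | (q : ℝ) ∈ S x}ᶜ := by
    ext x
    simp only [mem_preimage, mem_Ioi, lt_sSup_iff_exists_rat_of_forall_mem_of_le (hdown x) hc,
      mem_inter_iff, mem_iUnion, mem_ofPred_eq, mem_compl_iff]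
  rw [hpre]
  exact (MeasurableSet.iUnion fun q : ℚ => (MeasurableSet.const _).inter (hmeas q)).inter
    (MeasurableSet.iUnion fun q : ℚ => (MeasurableSet.const _).inter (hmeas q).compl)

theorem gaussianPDFReal_zero_one_apply (x : ℝ) :
    gaussianPDFReal 0 1 x = (√(2 * π))⁻¹ * exp (-x ^ 2 / 2) := by
  simp [gaussianPDFReal]

theorem hasDerivAt_gaussianPDFReal_zero_one (x : ℝ) :
    HasDerivAt (gaussianPDFReal 0 1) (-(x * gaussianPDFReal 0 1 x)) x := by
  have hexponent : HasDerivAt (fun x : ℝ => -x ^ 2 / 2) (-x) x :=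
    ((hasDerivAt_pow 2 x).neg.div_const 2).congr_deriv (by ring)
  rw [funext gaussianPDFReal_zero_one_apply]
  exact (hexponent.exp.const_mul _).congr_deriv (by ring)

theorem tendsto_gaussianPDFReal_zero_one_atTop :
    Tendsto (gaussianPDFReal 0 1) atTop (𝓝 0) := by
  have h : Tendsto (fun x : ℝ => -x ^ 2 / 2) atTop atBot :=
    (tendsto_neg_atTop_atBot.comp (tendsto_pow_atTop two_ne_zero)).atBot_div_const two_pos
  simpa [funext gaussianPDFReal_zero_one_apply] using
    (tendsto_exp_atBot.comp h).const_mul (√(2 * π))⁻¹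

theorem integrable_mul_gaussianPDFReal_zero_one :
    Integrable fun x => x * gaussianPDFReal 0 1 x := by
  refine ((integrable_mul_exp_neg_mul_sq (b := 1 / 2) (by norm_num)).const_mul
    (√(2 * π))⁻¹).congr (Eventually.of_forall fun x => ?_)
  simp only [gaussianPDFReal_zero_one_apply]
  ring_nf

theorem integral_abs_mul_gaussianPDFReal_zero_one_le :
    ∫ x, |x * gaussianPDFReal 0 1 x| ≤ 1 := by
  have heven : ∀ x, |x * gaussianPDFReal 0 1 x| = |x| * gaussianPDFReal 0 1 |x| := by
    intro x
    rw [abs_mul, abs_of_nonneg (gaussianPDFReal_nonneg _ _ _), gaussianPDFReal_zero_one_apply,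
      gaussianPDFReal_zero_one_apply, sq_abs]
  have hhalf : ∫ x in Ioi 0, x * gaussianPDFReal 0 1 x = gaussianPDFReal 0 1 0 := by
    have hderiv : ∀ x ∈ Ici (0 : ℝ), HasDerivAt (fun x => -gaussianPDFReal 0 1 x)
        (x * gaussianPDFReal 0 1 x) x := fun x _ =>
      (hasDerivAt_gaussianPDFReal_zero_one x).neg.congr_deriv (neg_neg _)
    rw [integral_Ioi_of_hasDerivAt_of_tendsto' hderiv
      integrable_mul_gaussianPDFReal_zero_one.integrableOn
      tendsto_gaussianPDFReal_zero_one_atTop.neg]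
    simp
  have hsqrt : 2 ≤ √(2 * π) := by
    rw [le_sqrt zero_le_two (by positivity)]
    nlinarith [pi_gt_three]
  calc ∫ x, |x * gaussianPDFReal 0 1 x|
      = 2 * (√(2 * π))⁻¹ := by
        simp_rw [heven]
        rw [integral_comp_abs (f := fun x => x * gaussianPDFReal 0 1 x), hhalf,
          gaussianPDFReal_zero_one_apply]
        simp
    _ ≤ 1 := by
        rw [← div_eq_mul_inv, div_le_one (by positivity)]
        exact hsqrt

theorem integral_abs_gaussianPDFReal_add_sub_le (t : ℝ) :
    ∫ x, |gaussianPDFReal 0 1 (x + t) - gaussianPDFReal 0 1 x| ≤ |t| := by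
  calc ∫ x, |gaussianPDFReal 0 1 (x + t) - gaussianPDFReal 0 1 x|
      ≤ |t| * ∫ x, |-(x * gaussianPDFReal 0 1 x)| :=
        integral_abs_sub_comp_add_le hasDerivAt_gaussianPDFReal_zero_one
          (integrable_mul_gaussianPDFReal_zero_one.neg) t
    _ ≤ |t| := by
        simp_rw [abs_neg]
        exact mul_le_of_le_one_right (abs_nonneg t) integral_abs_mul_gaussianPDFReal_zero_one_le

open Finset in
theorem gaussDensity_one_eq_prod {d : ℕ} (v : EuclideanSpace ℝ (Fin d)) :
    gaussDensity d 1 v = ∏ i, gaussianPDFReal 0 1 (v i) := by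
  have hconst : (2 * π) ^ (-(d : ℝ) / 2) = ((√(2 * π))⁻¹) ^ d := by
    rw [sqrt_eq_rpow, ← rpow_neg two_pi_pos.le, ← rpow_natCast, ← rpow_mul two_pi_pos.le]
    ring_nf
  simp only [gaussDensity, gaussianPDFReal_zero_one_apply, prod_mul_distrib, prod_const,
    card_univ, Fintype.card_fin, ← exp_sum, EuclideanSpace.real_norm_sq_eq, one_pow, mul_one,
    hconst, ← sum_div, sum_neg_distrib]

open Finset in
theorem sum_abs_le_sqrt_mul_norm {d : ℕ} (a : EuclideanSpace ℝ (Fin d)) :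
    ∑ i, |a i| ≤ √d * ‖a‖ := by
  simpa [EuclideanSpace.norm_eq] using sum_mul_le_sqrt_mul_sqrt univ (fun _ => 1) (fun i => |a i|)

theorem integrable_gaussDensity_one {d : ℕ} : Integrable (gaussDensity d 1) := by
  rw [← (PiLp.volume_preserving_toLp (Fin d)).integrable_comp_emb
    (MeasurableEquiv.toLp 2 (Fin d → ℝ)).measurableEmbedding]
  simp only [Function.comp_def, gaussDensity_one_eq_prod]
  exact Integrable.fintype_prod fun _ => integrable_gaussianPDFReal 0 1

open Finset in
theorem integral_abs_gaussDensity_add_sub_le {d : ℕ} (a : EuclideanSpace ℝ (Fin d)) :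
    ∫ z, |gaussDensity d 1 (z + a) - gaussDensity d 1 z| ≤ √d * ‖a‖ := by
  rw [← (PiLp.volume_preserving_toLp (Fin d)).integral_comp
    (MeasurableEquiv.toLp 2 (Fin d → ℝ)).measurableEmbedding]
  simp only [gaussDensity_one_eq_prod]
  calc ∫ x : Fin d → ℝ, |∏ i, gaussianPDFReal 0 1 (x i + a i) - ∏ i, gaussianPDFReal 0 1 (x i)|
      ≤ ∑ i, ∫ u, |gaussianPDFReal 0 1 (u + a i) - gaussianPDFReal 0 1 u| :=
        integral_abs_prod_comp_add_sub_prod_le (fun _ => gaussianPDFReal_nonneg 0 1)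
          (fun _ => integrable_gaussianPDFReal 0 1)
          (fun _ => integral_gaussianPDFReal_eq_one 0 one_ne_zero) _
    _ ≤ ∑ i, |a i| := sum_le_sum fun i _ => integral_abs_gaussianPDFReal_add_sub_le (a i)
    _ ≤ √d * ‖a‖ := sum_abs_le_sqrt_mul_norm a

theorem integral_gaussMeasure {d : ℕ} (σ : ℝ) (f : EuclideanSpace ℝ (Fin d) → ℝ) :
    ∫ z, f z ∂gaussMeasure d σ = ∫ z, gaussDensity d σ z * f z := by
  have hnonneg : ∀ z, 0 ≤ gaussDensity d σ z := fun z =>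
    mul_nonneg (rpow_nonneg (by positivity) _) (exp_pos _).le
  rw [gaussMeasure, integral_withDensity_eq_integral_toReal_smul
    (by unfold gaussDensity; fun_prop) (Eventually.of_forall fun _ => ENNReal.ofReal_lt_top)]
  simp only [ENNReal.toReal_ofReal (hnonneg _), smul_eq_mul]

section Cone

variable {d : ℕ} (Y : Finset (EuclideanSpace ℝ (Fin d)))

theorem isClosed_normalCone (y : EuclideanSpace ℝ (Fin d)) : IsClosed (normalCone Y y) := by
  simp only [normalCone, ofPred_forall]
  exact isClosed_iInter fun y' => isClosed_iInter fun _ => isClosed_le (by fun_prop) (by fun_prop)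

theorem isClosed_setOf_forall_exists_normalCone (U : Set (EuclideanSpace ℝ (Fin d))) (r : ℝ) :
    IsClosed {θ | ∀ u ∈ U, ∃ y ∈ Y, θ ∈ normalCone Y y ∧ θ + r • u ∈ normalCone Y y} := by
  simp only [ofPred_forall]
  refine isClosed_iInter fun u => isClosed_iInter fun _ => ?_
  have : {θ | ∃ y ∈ Y, θ ∈ normalCone Y y ∧ θ + r • u ∈ normalCone Y y} =
      ⋃ y ∈ Y, normalCone Y y ∩ (· + r • u) ⁻¹' normalCone Y y := by
    ext θ
    simp only [mem_ofPred_eq, mem_iUnion, mem_inter_iff, mem_preimage, exists_prop]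
  rw [this]
  exact Y.finite_toSet.isClosed_biUnion fun y _ =>
    (isClosed_normalCone Y y).inter ((isClosed_normalCone Y y).preimage (by fun_prop))

theorem measurable_coneRadius : Measurable (coneRadius Y) := by
  refine measurable_sSup_of_forall_mem_of_le (fun _ _ hr => hr.1) ?_ fun r =>
    (MeasurableSet.const (0 < r)).inter
      (isClosed_setOf_forall_exists_normalCone Y _ r).measurableSet
  rintro θ r r' ⟨hr, hcone⟩ hr' hle
  refine ⟨hr', fun u hu => ?_⟩
  have hscaled : (r' / r) • u ∈ closedBall (0 : EuclideanSpace ℝ (Fin d)) 1 := by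
    rw [mem_closedBall_zero_iff, norm_smul, Real.norm_of_nonneg (div_pos hr' hr).le]
    exact mul_le_one₀ (div_le_one_of_le₀ hle hr.le) (norm_nonneg u) (mem_closedBall_zero_iff.1 hu)
  obtain ⟨y, hy, hθ, hθu⟩ := hcone _ hscaled
  rw [smul_smul, mul_div_cancel₀ _ hr.ne'] at hθu
  exact ⟨y, hy, hθ, hθu⟩

instance : IsProbabilityMeasure (uniformBall d) := by
  have hpos : volume (closedBall (0 : EuclideanSpace ℝ (Fin d)) 1) ≠ 0 :=
    (measure_closedBall_pos volume 0 one_pos).ne'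
  constructor
  simp [uniformBall, ENNReal.inv_mul_cancel hpos measure_closedBall_lt_top.ne]

theorem p0_nonneg (y θ : EuclideanSpace ℝ (Fin d)) : 0 ≤ p0 Y y θ := ENNReal.toReal_nonneg

theorem p0_le_one (y θ : EuclideanSpace ℝ (Fin d)) : p0 Y y θ ≤ 1 :=
  ENNReal.toReal_le_of_le_ofReal zero_le_one (ENNReal.ofReal_one ▸ prob_le_one)

theorem measurable_p0 (y : EuclideanSpace ℝ (Fin d)) : Measurable (p0 Y y) := by
  have hcone : MeasurableSet {p : (EuclideanSpace ℝ (Fin d) × ℝ) × EuclideanSpace ℝ (Fin d) |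
      p.1.1 + p.1.2 • p.2 ∈ normalCone Y y} :=
    ((isClosed_normalCone Y y).preimage (by fun_prop)).measurableSet
  exact ((measurable_measure_prodMk_left hcone).comp
    (measurable_id.prodMk (measurable_coneRadius Y))).ennreal_toReal

end Cone

theorem statement4_general {d p : ℕ} (Y : Finset (EuclideanSpace ℝ (Fin d)))
    (W : Set (EuclideanSpace ℝ (Fin p)))
    (ψ : EuclideanSpace ℝ (Fin p) → EuclideanSpace ℝ (Fin d))
    (LW : ℝ) (hψ : ∀ w ∈ W, ∀ w' ∈ W, ‖ψ w - ψ w'‖ ≤ LW * ‖w - w'‖)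
    (lam : ℝ) (hlam : 0 < lam) (y : EuclideanSpace ℝ (Fin d)) :
    ∀ w ∈ W, ∀ w' ∈ W,
      |(∫ z, p0 Y y (ψ w + lam • z) ∂(gaussMeasure d 1)) -
          (∫ z, p0 Y y (ψ w' + lam • z) ∂(gaussMeasure d 1))| ≤
        LW * Real.sqrt d / lam * ‖w - w'‖ := by
  intro w hw w' hw'
  set b := lam⁻¹ • (ψ w - ψ w') with hb
  have hshift : ∀ z, ψ w + lam • z = ψ w' + lam • (z + b) := fun z => by
    rw [smul_add, smul_inv_smul₀ hlam.ne']
    abel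
  have hbound : ∀ z, |p0 Y y (ψ w' + lam • z)| ≤ 1 := fun z =>
    (abs_of_nonneg (p0_nonneg Y y _)).trans_le (p0_le_one Y y _)
  simp_rw [integral_gaussMeasure, hshift]
  calc _ ≤ 1 * ∫ z, |gaussDensity d 1 (z - b) - gaussDensity d 1 z| :=
        abs_integral_mul_comp_add_sub_le integrable_gaussDensity_one
          ((measurable_p0 Y y).comp (by fun_prop)).aestronglyMeasurable hbound b
    _ ≤ √d * ‖-b‖ := by
        rw [one_mul]
        simpa only [← sub_eq_add_neg] using integral_abs_gaussDensity_add_sub_le (-b)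
    _ = √d * (‖ψ w - ψ w'‖ / lam) := by
        rw [norm_neg, hb, norm_smul, norm_inv, Real.norm_of_nonneg hlam.le, inv_mul_eq_div]
    _ ≤ √d * (LW * ‖w - w'‖ / lam) := by gcongr; exact hψ w hw w' hw'
    _ = LW * Real.sqrt d / lam * ‖w - w'‖ := by ring

/-- If `w ↦ ψ_w(x)` is `L_W`-Lipschitz on `W`, then for every `λ > 0` and `y ∈ Y` the map
`w ↦ p_λ(y|ψ_w(x)) = E_Z[p_0(y|ψ_w(x) + λZ)]`, with `Z` standard Gaussian, is
`L_W·√d/λ`-Lipschitz on `W`. -/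
theorem statement4 {d p : ℕ} (hd : 1 ≤ d) (Y : Finset (EuclideanSpace ℝ (Fin d)))
    (hY : Y.Nonempty) (W : Set (EuclideanSpace ℝ (Fin p)))
    (ψ : EuclideanSpace ℝ (Fin p) → EuclideanSpace ℝ (Fin d))
    (LW : ℝ) (hψ : ∀ w ∈ W, ∀ w' ∈ W, ‖ψ w - ψ w'‖ ≤ LW * ‖w - w'‖)
    (lam : ℝ) (hlam : 0 < lam) (y : EuclideanSpace ℝ (Fin d)) (hy : y ∈ Y) :
    ∀ w ∈ W, ∀ w' ∈ W,
      |(∫ z, p0 Y y (ψ w + lam • z) ∂(gaussMeasure d 1)) -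
          (∫ z, p0 Y y (ψ w' + lam • z) ∂(gaussMeasure d 1))| ≤
        LW * Real.sqrt d / lam * ‖w - w'‖ :=
  statement4_general Y W ψ LW hψ lam hlam y
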